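/- If a graph G can be edge-partitioned into two subgraphs F and H (i.e., E(G) is the disjoint union of E(F) and E(H)), then χ'_st(G) ≤ χ'_st(F) + χ'_s(H|_G), where χ'_s(H|_G) is the restricted strong chromatic index of H on G. -/

import Mathlib

/-!
Color the edges of `H` by a restricted-strong coloring with fresh colors and the remaining
edges by a star coloring of `F`. A bicolored path `v₀v₁v₂v₃v₄` in `G` either has two equally
colored `H`-edges joined by an edge of `G`, which the restricted-strong coloring forbids, or
lies in `F`.

It remains to see that both `sInf`s are attained. If `G` has no star coloring then
`starChromaticIndex G = sInf ∅ = 0` and there is nothing to prove. Otherwise, a proper edge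
coloring of `G` with `k` colors bounds all degrees by `k`, so an edge of `H` conflicts with at
most `2k(k + 1)` others; greedy coloring of finite pieces and the de Bruijn–Erdős compactness
theorem then give a restricted-strong coloring with finitely many colors.
-/

open SimpleGraph

/-- A star edge-coloring with `k` colors: a proper edge-coloring such that no
path or cycle with four edges is bicolored. -/
def IsStarEdgeColoring {V : Type*} {k : ℕ} (G : SimpleGraph V) (c : Sym2 V → Fin k) : Prop :=
  (∀ ⦃e f : Sym2 V⦄, e ∈ G.edgeSet → f ∈ G.edgeSet → e ≠ f →
      (∃ v, v ∈ e ∧ v ∈ f) → c e ≠ c f) ∧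
  (∀ v0 v1 v2 v3 v4 : V, G.Adj v0 v1 → G.Adj v1 v2 → G.Adj v2 v3 → G.Adj v3 v4 →
      v0 ≠ v2 → v0 ≠ v3 → v1 ≠ v3 → v1 ≠ v4 → v2 ≠ v4 →
      ¬ (c s(v0, v1) = c s(v2, v3) ∧ c s(v1, v2) = c s(v3, v4)))

/-- The star chromatic index: the least `k` admitting a star `k`-edge-coloring. -/
noncomputable def starChromaticIndex {V : Type*} (G : SimpleGraph V) : ℕ :=
  sInf {k | ∃ c : Sym2 V → Fin k, IsStarEdgeColoring G c}

/-- A restricted-strong edge-coloring of H on G: edges of H at distance at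
most two in G get distinct colors. -/
def IsRestrictedStrongColoring {V : Type*} {k : ℕ} (G H : SimpleGraph V)
    (c : Sym2 V → Fin k) : Prop :=
  ∀ ⦃e f : Sym2 V⦄, e ∈ H.edgeSet → f ∈ H.edgeSet → e ≠ f →
    ((∃ v, v ∈ e ∧ v ∈ f) ∨
      ∃ g ∈ G.edgeSet, (∃ v, v ∈ e ∧ v ∈ g) ∧ (∃ v, v ∈ g ∧ v ∈ f)) →
    c e ≠ c f

noncomputable def restrictedStrongChromaticIndex {V : Type*} (G H : SimpleGraph V) : ℕ :=
  sInf {k | ∃ c : Sym2 V → Fin k, IsRestrictedStrongColoring G H c}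

namespace SimpleGraph

variable {V : Type*} (G : SimpleGraph V)

theorem exists_fin_coloring_on_finset {m : ℕ} (h : ∀ v, (G.neighborSet v).encard < m)
    (s : Finset V) : ∃ c : V → Fin m, ∀ u ∈ s, ∀ v ∈ s, G.Adj u v → c u ≠ c v := by
  classical
  induction s using Finset.induction_on with
  | empty =>
    exact ⟨fun v => ⟨0, by exact_mod_cast pos_of_gt (h v)⟩, by simp⟩
  | insert a s ha ih =>
    obtain ⟨c, hc⟩ := ih
    obtain ⟨i, hi⟩ : ∃ i, i ∉ c '' G.neighborSet a := by
      by_contra! hall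
      have : (m : ℕ∞) ≤ (G.neighborSet a).encard := calc
        (m : ℕ∞) = (Set.univ : Set (Fin m)).encard := by simp
        _ ≤ (c '' G.neighborSet a).encard := Set.encard_le_encard fun i _ => hall i
        _ ≤ (G.neighborSet a).encard := Set.encard_image_le _ _
      exact (h a).not_ge this
    have hfresh : ∀ w ∈ s, G.Adj a w → Function.update c a i a ≠ Function.update c a i w := by
      intro w hw haw
      rw [Function.update_self, Function.update_of_ne (ne_of_mem_of_not_mem hw ha)]
      exact fun hiw => hi ⟨w, haw, hiw.symm⟩
    refine ⟨Function.update c a i, fun u hu v hv huv => ?_⟩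
    rw [Finset.mem_insert] at hu hv
    rcases hu with rfl | hu <;> rcases hv with rfl | hv
    · exact absurd huv G.irrefl
    · exact hfresh v hv huv
    · exact (hfresh u hu huv.symm).symm
    · rw [Function.update_of_ne (ne_of_mem_of_not_mem hu ha),
        Function.update_of_ne (ne_of_mem_of_not_mem hv ha)]
      exact hc u hu v hv huv

theorem colorable_of_encard_neighborSet_lt {m : ℕ} (h : ∀ v, (G.neighborSet v).encard < m) :
    G.Colorable m := by
  refine nonempty_hom_of_forall_finite_subgraph_hom fun G' hfin => ?_
  have hc := (G.exists_fin_coloring_on_finset h hfin.toFinset).choose_spec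
  exact ⟨fun v => _, fun {u v} huv =>
    by simpa using hc u (by simp) v (by simp) (G'.adj_sub huv)⟩

end SimpleGraph

section EdgeColoring

variable {V : Type*} {G F H : SimpleGraph V} {k : ℕ}

def IsProperEdgeColoring (G : SimpleGraph V) (c : Sym2 V → Fin k) : Prop :=
  ∀ ⦃e f : Sym2 V⦄, e ∈ G.edgeSet → f ∈ G.edgeSet → e ≠ f → (∃ v, v ∈ e ∧ v ∈ f) → c e ≠ c f

theorem IsStarEdgeColoring.isProperEdgeColoring {c : Sym2 V → Fin k}
    (hc : IsStarEdgeColoring G c) : IsProperEdgeColoring G c :=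
  hc.1

theorem IsStarEdgeColoring.mono (hFG : F.edgeSet ⊆ G.edgeSet) {c : Sym2 V → Fin k}
    (hc : IsStarEdgeColoring G c) : IsStarEdgeColoring F c := by
  have hadj {u v : V} (h : F.Adj u v) : G.Adj u v := hFG (F.mem_edgeSet.2 h)
  exact ⟨fun e f he hf => hc.1 (hFG he) (hFG hf),
    fun v0 v1 v2 v3 v4 h01 h12 h23 h34 =>
      hc.2 v0 v1 v2 v3 v4 (hadj h01) (hadj h12) (hadj h23) (hadj h34)⟩

namespace IsProperEdgeColoring

variable {c : Sym2 V → Fin k}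

theorem encard_neighborSet_le (hc : IsProperEdgeColoring G c) (v : V) :
    (G.neighborSet v).encard ≤ k := calc
  (G.neighborSet v).encard ≤ (Set.univ : Set (Fin k)).encard :=
      Set.encard_le_encard_of_injOn (f := fun x => c s(v, x)) (fun _ _ => trivial)
        fun x hx y hy hxy => by
          by_contra hne
          exact hc hx hy (fun h => hne (Sym2.congr_right.1 h)) ⟨v, by simp, by simp⟩ hxy
  _ = k := by simp

theorem encard_near_ends_le (hc : IsProperEdgeColoring G c) (e : Sym2 V) :
    {x | ∃ y ∈ e, x = y ∨ G.Adj y x}.encard ≤ 2 * (k + 1) := by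
  induction e using Sym2.ind with | _ a b =>
  calc _ ≤ (insert a (G.neighborSet a) ∪ insert b (G.neighborSet b)).encard := by
        refine Set.encard_le_encard ?_
        rintro x ⟨y, hy, rfl | hyx⟩ <;> rcases Sym2.mem_iff.1 hy with rfl | rfl <;> simp [*]
    _ ≤ (G.neighborSet a).encard + 1 + ((G.neighborSet b).encard + 1) :=
        (Set.encard_union_le _ _).trans
          (add_le_add (Set.encard_insert_le _ _) (Set.encard_insert_le _ _))
    _ ≤ k + 1 + (k + 1) := by gcongr <;> exact hc.encard_neighborSet_le _
    _ = 2 * (k + 1) := by ring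

/-- An edge meeting `B` is determined by a vertex of `B` on it together with its color. -/
theorem encard_edges_meeting_le (hc : IsProperEdgeColoring G c) (B : Set V) :
    {f ∈ G.edgeSet | ∃ x ∈ B, x ∈ f}.encard ≤ B.encard * k := by
  obtain rfl | ⟨v, -⟩ := B.eq_empty_or_nonempty
  · simp
  have : Nonempty V := ⟨v⟩
  choose! x hxB hxf using fun f (hf : f ∈ {f ∈ G.edgeSet | ∃ x ∈ B, x ∈ f}) => hf.2
  calc _ ≤ (B ×ˢ (Set.univ : Set (Fin k))).encard :=
        Set.encard_le_encard_of_injOn (f := fun f => (x f, c f))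
          (fun f hf => ⟨hxB f hf, trivial⟩) fun f hf f' hf' heq => by
            obtain ⟨hx, hcol⟩ : x f = x f' ∧ c f = c f' := Prod.ext_iff.1 heq
            by_contra hne
            exact hc hf.1 hf'.1 hne ⟨x f, hxf f hf, hx ▸ hxf f' hf'⟩ hcol
    _ = B.encard * k := by simp [Set.encard_prod]

end IsProperEdgeColoring

/-- Edges at distance at most two in `G`, as in `IsRestrictedStrongColoring`. -/
def EdgesNear (G : SimpleGraph V) (e f : Sym2 V) : Prop :=
  (∃ v, v ∈ e ∧ v ∈ f) ∨ ∃ g ∈ G.edgeSet, (∃ v, v ∈ e ∧ v ∈ g) ∧ (∃ v, v ∈ g ∧ v ∈ f)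

theorem EdgesNear.symm {e f : Sym2 V} : EdgesNear G e f → EdgesNear G f e := by
  rintro (⟨v, hve, hvf⟩ | ⟨g, hg, ⟨v, hve, hvg⟩, ⟨w, hwg, hwf⟩⟩)
  · exact .inl ⟨v, hvf, hve⟩
  · exact .inr ⟨g, hg, ⟨w, hwf, hwg⟩, ⟨v, hvg, hve⟩⟩

theorem EdgesNear.exists_mem_adj {e f : Sym2 V} :
    EdgesNear G e f → ∃ x ∈ f, ∃ y ∈ e, x = y ∨ G.Adj y x := by
  rintro (⟨v, hve, hvf⟩ | ⟨g, hg, ⟨v, hve, hvg⟩, ⟨w, hwg, hwf⟩⟩)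
  · exact ⟨v, hvf, v, hve, .inl rfl⟩
  · refine ⟨w, hwf, v, hve, or_iff_not_imp_left.2 fun hwv => ?_⟩
    rwa [(Sym2.mem_and_mem_iff (Ne.symm hwv)).1 ⟨hvg, hwg⟩] at hg

def strongConflictGraph (G H : SimpleGraph V) : SimpleGraph (Sym2 V) where
  Adj e f := e ≠ f ∧ e ∈ H.edgeSet ∧ f ∈ H.edgeSet ∧ EdgesNear G e f
  symm := ⟨fun _ _ h => ⟨h.1.symm, h.2.2.1, h.2.1, h.2.2.2.symm⟩⟩
  loopless := ⟨fun _ h => h.1 rfl⟩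

theorem isRestrictedStrongColoring_of_coloring {m : ℕ}
    (C : (strongConflictGraph G H).Coloring (Fin m)) : IsRestrictedStrongColoring G H C :=
  fun e f he hf hne hnear =>
    C.valid (show (strongConflictGraph G H).Adj e f from ⟨hne, he, hf, hnear⟩)

theorem IsProperEdgeColoring.encard_neighborSet_strongConflictGraph_lt
    (hHG : H.edgeSet ⊆ G.edgeSet) {c : Sym2 V → Fin k} (hc : IsProperEdgeColoring G c)
    (e : Sym2 V) :
    ((strongConflictGraph G H).neighborSet e).encard < (2 * (k + 1) * k + 1 : ℕ) := by
  set B := {x | ∃ y ∈ e, x = y ∨ G.Adj y x}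
  have hsub : (strongConflictGraph G H).neighborSet e ⊆ {f ∈ G.edgeSet | ∃ x ∈ B, x ∈ f} :=
    fun f ⟨_, _, hfH, hnear⟩ =>
      let ⟨x, hxf, y, hye, hxy⟩ := hnear.exists_mem_adj
      ⟨hHG hfH, x, ⟨y, hye, hxy⟩, hxf⟩
  calc _ ≤ B.encard * k := (Set.encard_le_encard hsub).trans (hc.encard_edges_meeting_le B)
    _ ≤ (2 * (k + 1) : ℕ) * k := by gcongr; exact_mod_cast hc.encard_near_ends_le e
    _ < _ := by norm_cast; omega

theorem IsProperEdgeColoring.exists_isRestrictedStrongColoring (hHG : H.edgeSet ⊆ G.edgeSet)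
    {c : Sym2 V → Fin k} (hc : IsProperEdgeColoring G c) :
    ∃ m, ∃ c' : Sym2 V → Fin m, IsRestrictedStrongColoring G H c' :=
  let ⟨C⟩ := (strongConflictGraph G H).colorable_of_encard_neighborSet_lt
    (hc.encard_neighborSet_strongConflictGraph_lt hHG)
  ⟨_, C, isRestrictedStrongColoring_of_coloring C⟩

theorem IsRestrictedStrongColoring.ne_of_adj {c : Sym2 V → Fin k}
    (hc : IsRestrictedStrongColoring G H c) {a b b' a' : V} (hbb' : G.Adj b b')
    (hab' : a ≠ b') (haa' : a ≠ a') (hab : s(a, b) ∈ H.edgeSet) (hba : s(b', a') ∈ H.edgeSet) :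
    c s(a, b) ≠ c s(b', a') :=
  hc hab hba (by simp [hab', haa'])
    (.inr ⟨s(b, b'), hbb', ⟨b, by simp, by simp⟩, ⟨b', by simp, by simp⟩⟩)

open Classical in
noncomputable def sumEdgeColoring (H : SimpleGraph V) {k₁ k₂ : ℕ} (cF : Sym2 V → Fin k₁)
    (cH : Sym2 V → Fin k₂) (e : Sym2 V) : Fin (k₁ + k₂) :=
  finSumFinEquiv (if e ∈ H.edgeSet then .inr (cH e) else .inl (cF e))

theorem sumEdgeColoring_eq_iff {k₁ k₂ : ℕ} {cF : Sym2 V → Fin k₁} {cH : Sym2 V → Fin k₂}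
    {e f : Sym2 V} : sumEdgeColoring H cF cH e = sumEdgeColoring H cF cH f ↔
      (e ∈ H.edgeSet ∧ f ∈ H.edgeSet ∧ cH e = cH f) ∨
        (e ∉ H.edgeSet ∧ f ∉ H.edgeSet ∧ cF e = cF f) := by
  simp only [sumEdgeColoring, EmbeddingLike.apply_eq_iff_eq]
  split_ifs <;> simp [*]

theorem IsStarEdgeColoring.sumEdgeColoring (hGFH : G.edgeSet ⊆ F.edgeSet ∪ H.edgeSet)
    {k₁ k₂ : ℕ} {cF : Sym2 V → Fin k₁} {cH : Sym2 V → Fin k₂}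
    (hcF : IsStarEdgeColoring F cF) (hcH : IsRestrictedStrongColoring G H cH) :
    IsStarEdgeColoring G (sumEdgeColoring H cF cH) := by
  have hF {e : Sym2 V} (he : e ∈ G.edgeSet) (heH : e ∉ H.edgeSet) : e ∈ F.edgeSet :=
    (hGFH he).resolve_right heH
  refine ⟨fun e f he hf hne hmeet hcol => ?_,
    fun v0 v1 v2 v3 v4 h01 h12 h23 h34 d02 d03 d13 d14 d24 ⟨hA, hB⟩ => ?_⟩
  · rcases sumEdgeColoring_eq_iff.1 hcol with ⟨heH, hfH, h⟩ | ⟨heH, hfH, h⟩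
    · exact hcH heH hfH hne (.inl hmeet) h
    · exact hcF.1 (hF he heH) (hF hf hfH) hne hmeet h
  rcases sumEdgeColoring_eq_iff.1 hA with ⟨h01H, h23H, hA⟩ | ⟨h01H, h23H, hA⟩
  · exact hcH.ne_of_adj h12 d02 d03 h01H h23H hA
  rcases sumEdgeColoring_eq_iff.1 hB with ⟨h12H, h34H, hB⟩ | ⟨h12H, h34H, hB⟩
  · exact hcH.ne_of_adj h23 d13 d14 h12H h34H hB
  exact hcF.2 v0 v1 v2 v3 v4 (hF h01 h01H) (hF h12 h12H) (hF h23 h23H) (hF h34 h34H)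
    d02 d03 d13 d14 d24 ⟨hA, hB⟩

theorem IsStarEdgeColoring.starChromaticIndex_le {c : Sym2 V → Fin k}
    (hc : IsStarEdgeColoring G c) : starChromaticIndex G ≤ k :=
  Nat.sInf_le ⟨c, hc⟩

theorem exists_isStarEdgeColoring_starChromaticIndex {c : Sym2 V → Fin k}
    (hc : IsStarEdgeColoring G c) :
    ∃ c' : Sym2 V → Fin (starChromaticIndex G), IsStarEdgeColoring G c' :=
  Nat.sInf_mem (⟨k, c, hc⟩ : {k | ∃ c : Sym2 V → Fin k, IsStarEdgeColoring G c}.Nonempty)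

theorem exists_isRestrictedStrongColoring_restrictedStrongChromaticIndex
    (h : ∃ m, ∃ c : Sym2 V → Fin m, IsRestrictedStrongColoring G H c) :
    ∃ c : Sym2 V → Fin (restrictedStrongChromaticIndex G H), IsRestrictedStrongColoring G H c :=
  Nat.sInf_mem h

end EdgeColoring

theorem star_chromatic_index_edge_partition_general {V : Type*} (G F H : SimpleGraph V)
    (hUnion : G.edgeSet = F.edgeSet ∪ H.edgeSet) :
    starChromaticIndex G ≤ starChromaticIndex F + restrictedStrongChromaticIndex G H := by
  rcases Set.eq_empty_or_nonempty {k | ∃ c : Sym2 V → Fin k, IsStarEdgeColoring G c}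
    with hG | ⟨k, c, hc⟩
  · simp [starChromaticIndex, hG]
  obtain ⟨cF, hcF⟩ :=
    exists_isStarEdgeColoring_starChromaticIndex (hc.mono (hUnion ▸ Set.subset_union_left))
  obtain ⟨cH, hcH⟩ := exists_isRestrictedStrongColoring_restrictedStrongChromaticIndex
    (hc.isProperEdgeColoring.exists_isRestrictedStrongColoring (hUnion ▸ Set.subset_union_right))
  exact (hcF.sumEdgeColoring hUnion.le hcH).starChromaticIndex_le

theorem star_chromatic_index_edge_partition {V : Type*} (G F H : SimpleGraph V)
    (hUnion : G.edgeSet = F.edgeSet ∪ H.edgeSet)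
    (hDisj : Disjoint F.edgeSet H.edgeSet) :
    starChromaticIndex G ≤ starChromaticIndex F + restrictedStrongChromaticIndex G H :=
  star_chromatic_index_edge_partition_general G F H hUnion
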